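/- arXiv:1607.05750 — 9 statements merged into one kernel-verified Lean document; each statement's English description precedes it below -/
import Mathlib

section
/- If S : ℝ → ℝ is subadditive (S(u+v) ≤ S(u)+S(v) for all u,v) and Lebesgue measurable, then S is locally bounded, i.e., for every x ∈ ℝ there exist δ > 0 and M such that |S(y)| ≤ M for all y with |y - x| < δ. -/
open MeasureTheory Set Pointwise

theorem stmt_0 (S : ℝ → ℝ)
    (hsub : ∀ u v : ℝ, S (u + v) ≤ S u + S v)
    (hmeas : Measurable S) :
    ∀ x : ℝ, ∃ δ > (0 : ℝ), ∃ M : ℝ, ∀ y : ℝ, |y - x| < δ → |S y| ≤ M := by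
  -- Find n such that E_n = {y ∈ [0,1] : S y ≤ n ∧ S (-y) ≤ n} has positive measure.
  obtain ⟨n, hn⟩ : ∃ n : ℕ, 0 < volume {y : ℝ | y ∈ Icc (0:ℝ) 1 ∧ S y ≤ n ∧ S (-y) ≤ n} := by
    by_contra h
    push_neg at h
    simp only [le_zero_iff] at h
    have h0 : volume (⋃ n : ℕ, {y : ℝ | y ∈ Icc (0:ℝ) 1 ∧ S y ≤ n ∧ S (-y) ≤ n}) = 0 :=
      measure_iUnion_null h
    have hcover : Icc (0:ℝ) 1 ⊆
        ⋃ n : ℕ, {y : ℝ | y ∈ Icc (0:ℝ) 1 ∧ S y ≤ n ∧ S (-y) ≤ n} := by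
      intro y hy
      obtain ⟨n, hn⟩ := exists_nat_ge (max (S y) (S (-y)))
      exact mem_iUnion.2 ⟨n, hy, (le_max_left _ _).trans hn, (le_max_right _ _).trans hn⟩
    have := measure_mono_null hcover h0
    simp [Real.volume_Icc] at this
  set E : Set ℝ := {y : ℝ | y ∈ Icc (0:ℝ) 1 ∧ S y ≤ n ∧ S (-y) ≤ n} with hE
  have hEmeas : MeasurableSet E := by
    have : E = Icc (0:ℝ) 1 ∩ (S ⁻¹' Iic (n:ℝ)) ∩ ((fun y => S (-y)) ⁻¹' Iic (n:ℝ)) := by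
      ext y; simp [hE, and_assoc]
    rw [this]
    exact (measurableSet_Icc.inter (hmeas measurableSet_Iic)).inter
      ((hmeas.comp measurable_neg) measurableSet_Iic)
  have hst : E - E ∈ nhds (0:ℝ) :=
    MeasureTheory.Measure.sub_mem_nhds_zero_of_addHaar_pos volume E hEmeas hn
  obtain ⟨ε, hε, hball⟩ := Metric.mem_nhds_iff.1 hst
  -- S is bounded above by 2n on the ball of radius ε around 0.
  have hup : ∀ z : ℝ, |z| < ε → S z ≤ 2 * n := by
    intro z hz
    have hz' : z ∈ E - E := hball (by simpa [Real.dist_eq] using hz)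
    obtain ⟨a, ha, b, hb, hab⟩ := hz'
    have h1 : S z ≤ S a + S (-b) := by
      rw [← hab]; simpa [sub_eq_add_neg] using hsub a (-b)
    have := ha.2.1
    have := hb.2.2
    linarith
  intro x
  have hupx : ∀ w : ℝ, |w - x| < ε → S w ≤ S x + 2 * n := by
    intro w hw
    have h1 : S (x + (w - x)) ≤ S x + S (w - x) := hsub x (w - x)
    have h2 := hup (w - x) hw
    simp only [add_sub_cancel] at h1
    linarith
  refine ⟨ε, hε, max (S x + 2 * n) (-(S (x + x) - S x - 2 * n)), fun y hy => ?_⟩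
  have h1 : S y ≤ S x + 2 * n := hupx y hy
  have h2 : S (x + x) - S x - 2 * n ≤ S y := by
    have ha : S (x + x) ≤ S y + S (x + x - y) := by
      have := hsub y (x + x - y); simpa using this
    have hb : |x + x - y - x| < ε := by
      have : x + x - y - x = -(y - x) := by ring
      rw [this, abs_neg]; exact hy
    have := hupx (x + x - y) hb
    linarith
  rw [abs_le]
  constructor
  · have := le_max_right (S x + 2 * n) (-(S (x + x) - S x - 2 * n))
    linarith
  · exact h1.trans (le_max_left _ _)
end

section
/- If S : ℝ → ℝ is subadditive and has the Baire property (preimages of open sets are Baire sets), then S is locally bounded. -/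
open Set Filter Topology

/-- The map `x ↦ a - x` pulls residual sets back to residual sets. -/
lemma residual_preimage_sub (a : ℝ) {s : Set ℝ} (hs : s ∈ residual ℝ) :
    {x : ℝ | a - x ∈ s} ∈ residual ℝ := by
  let h : ℝ ≃ₜ ℝ := (Homeomorph.neg ℝ).trans (Homeomorph.addLeft a)
  have hmap := h.residual_map_eq
  have : h ⁻¹' s ∈ residual ℝ := by
    rw [← Filter.mem_map, hmap]; exact hs
  have heq : h ⁻¹' s = {x : ℝ | a - x ∈ s} := by
    ext x; simp [h, sub_eq_add_neg]
  rwa [heq] at this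

theorem stmt_1 (S : ℝ → ℝ)
    (hsub : ∀ u v : ℝ, S (u + v) ≤ S u + S v)
    (hbaire : ∀ U : Set ℝ, IsOpen U → BaireMeasurableSet (S ⁻¹' U)) :
    ∀ x : ℝ, ∃ δ > (0 : ℝ), ∃ M : ℝ, ∀ y : ℝ, |y - x| < δ → |S y| ≤ M := by
  -- Step 1: some level set `A = S ⁻¹' (Iio n)` is non-meagre.
  have hcover : (⋃ n : ℕ, S ⁻¹' Iio (n : ℝ)) = univ := by
    ext x
    simp only [mem_iUnion, mem_preimage, mem_Iio, mem_univ, iff_true]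
    exact exists_nat_gt (S x)
  have hex : ∃ n : ℕ, ¬ IsMeagre (S ⁻¹' Iio (n : ℝ)) := by
    by_contra h
    push_neg at h
    have hm : IsMeagre (⋃ n : ℕ, S ⁻¹' Iio (n : ℝ)) := isMeagre_iUnion h
    rw [hcover] at hm
    have : Dense ((univ : Set ℝ)ᶜ) := dense_of_mem_residual hm
    rw [compl_univ] at this
    exact this.nonempty.ne_empty rfl
  obtain ⟨n, hA⟩ := hex
  set A : Set ℝ := S ⁻¹' Iio (n : ℝ) with hAdef
  have hAb : BaireMeasurableSet A := hbaire _ isOpen_Iio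
  obtain ⟨U, hUo, hAU⟩ := hAb.residualEq_isOpen
  -- the residual set where `A` and `U` agree
  have hE : {x : ℝ | x ∈ A ↔ x ∈ U} ∈ residual ℝ := by
    have := hAU
    rw [Filter.eventuallyEq_set] at this
    exact this
  have hR1 : {x : ℝ | x ∈ U → x ∈ A} ∈ residual ℝ :=
    Filter.mem_of_superset hE fun x hx => hx.mpr
  -- `U` is nonempty
  have hUne : U.Nonempty := by
    rcases eq_empty_or_nonempty U with h | h
    · exfalso
      apply hA
      rw [IsMeagre]
      refine Filter.mem_of_superset hE ?_
      intro x hx hxA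
      exact (h ▸ hx.mp hxA : x ∈ (∅ : Set ℝ))
    · exact h
  obtain ⟨c, hc⟩ := hUne
  obtain ⟨ε, hε, hball⟩ := Metric.isOpen_iff.mp hUo c hc
  -- Step 2: `S` is bounded above on a ball around `2c`.
  have key : ∀ t : ℝ, |t| < ε → S (2 * c + t) ≤ 2 * n := by
    intro t ht
    have hR2 : {x : ℝ | (2 * c + t) - x ∈ U → (2 * c + t) - x ∈ A} ∈ residual ℝ :=
      residual_preimage_sub (2 * c + t) hR1
    have hdense : Dense ({x : ℝ | x ∈ U → x ∈ A} ∩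
        {x : ℝ | (2 * c + t) - x ∈ U → (2 * c + t) - x ∈ A}) :=
      dense_of_mem_residual (Filter.inter_mem hR1 hR2)
    -- find a point in the ball around `c + t/2` of radius `ε - |t|/2`
    have hr : (0:ℝ) < ε - |t| / 2 := by linarith [abs_nonneg t]
    obtain ⟨x, ⟨hxR1, hxR2⟩, hx2⟩ := hdense.exists_mem_open
      (Metric.isOpen_ball (x := c + t / 2) (ε := ε - |t| / 2))
      (Metric.nonempty_ball.mpr hr)
    have hxz : |x - (c + t / 2)| < ε - |t| / 2 := by
      have := Metric.mem_ball.mp hx2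
      rwa [Real.dist_eq] at this
    have hxU : x ∈ U := by
      apply hball
      rw [Metric.mem_ball, Real.dist_eq]
      have : |x - c| ≤ |x - (c + t / 2)| + |t / 2| := by
        have := abs_sub_abs_le_abs_sub (x - c) (x - (c + t/2))
        calc |x - c| = |(x - (c + t/2)) + t/2| := by ring_nf
          _ ≤ |x - (c + t/2)| + |t/2| := abs_add_le _ _
      have h2 : |t / 2| = |t| / 2 := by rw [abs_div]; norm_num
      linarith [this, h2 ▸ this]
    have hyU : (2 * c + t) - x ∈ U := by
      apply hball
      rw [Metric.mem_ball, Real.dist_eq]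
      have : |(2 * c + t - x) - c| = |(c + t/2 - x) + t/2| := by ring_nf
      rw [this]
      have h3 : |(c + t/2 - x) + t/2| ≤ |c + t/2 - x| + |t/2| := abs_add_le _ _
      have h4 : |c + t/2 - x| = |x - (c + t/2)| := abs_sub_comm _ _
      have h2 : |t / 2| = |t| / 2 := by rw [abs_div]; norm_num
      linarith
    have hxA : x ∈ A := hxR1 hxU
    have hyA : (2 * c + t) - x ∈ A := hxR2 hyU
    have h1 : S x < n := hxA
    have h2 : S ((2 * c + t) - x) < n := hyA
    have := hsub x ((2 * c + t) - x)
    have heq : x + ((2 * c + t) - x) = 2 * c + t := by ring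
    rw [heq] at this
    linarith
  -- Step 3: local boundedness at every point.
  intro x
  refine ⟨ε, hε, ?_⟩
  set M₁ : ℝ := 2 * n + S (x - 2 * c) with hM₁
  have hupper : ∀ y : ℝ, |y - x| < ε → S y ≤ M₁ := by
    intro y hy
    have h1 : S y ≤ S (2 * c + (y - x)) + S (x - 2 * c) := by
      have := hsub (2 * c + (y - x)) (x - 2 * c)
      have heq : (2 * c + (y - x)) + (x - 2 * c) = y := by ring
      rw [heq] at this
      exact this
    have h2 := key (y - x) hy
    linarith
  refine ⟨max M₁ (M₁ - S (x + x)), ?_⟩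
  intro y hy
  rw [abs_le]
  constructor
  · have h1 : S (x + x) ≤ S y + S (x + x - y) := by
      have := hsub y (x + x - y)
      have heq : y + (x + x - y) = x + x := by ring
      rw [heq] at this
      exact this
    have h2 : S (x + x - y) ≤ M₁ := by
      apply hupper
      have : |x + x - y - x| = |y - x| := by
        rw [← abs_neg]; ring_nf
      rw [this]
      exact hy
    have : S (x + x) - M₁ ≤ S y := by linarith
    have hle : -(max M₁ (M₁ - S (x + x))) ≤ S (x + x) - M₁ := by
      have := le_max_right M₁ (M₁ - S (x + x))
      linarith
    linarith
  · exact le_trans (hupper y hy) (le_max_left _ _)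
end

section
/- Let A, B ⊆ (0,∞) be Lebesgue measurable sets with respective Lebesgue density points a, b > 0. Then there exist sequences of positive rationals qₙ and points aₙ ∈ A, bₙ ∈ B with aₙ → a, bₙ → b and bₙ = qₙ · aₙ for all n. -/
/-!
Near its density point `a`, the set `A` fills all but a small fraction of `(a - δ, a + δ)`.
For a rational `q` just below `b / a`, multiplication by `q` maps `(a - δ, a + δ)` into an
interval of radius `2qδ` around `b`, which `B` fills up to a small fraction; pulled back by
`x ↦ q x` this exceptional part still has measure small compared with `δ`. The two exceptional
parts cannot cover `(a - δ, a + δ)`, which leaves `x ∈ A` with `q x ∈ B`; letting `δ → 0`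
gives the sequences.
-/

open MeasureTheory Filter

/-- `a` is a Lebesgue density point of `A`. -/
def IsDensityPoint (A : Set ℝ) (a : ℝ) : Prop :=
  Tendsto (fun δ : ℝ => volume (A ∩ Set.Ioo (a - δ) (a + δ)) / ENNReal.ofReal (2 * δ))
    (nhdsWithin 0 (Set.Ioi 0)) (nhds 1)

open Set Topology

theorem nonempty_inter_of_measure_diff_add_lt {α : Type*} [MeasurableSpace α] (μ : Measure α)
    {s t u : Set α} (h : μ (s \ t) + μ (s \ u) < μ s) : (s ∩ t ∩ u).Nonempty := by
  by_contra hempty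
  have hcover : s ⊆ (s \ t) ∪ (s \ u) := fun x hx => by
    by_cases ht : x ∈ t
    · exact Or.inr ⟨hx, fun hu => hempty ⟨x, ⟨hx, ht⟩, hu⟩⟩
    · exact Or.inl ⟨hx, ht⟩
  exact (measure_mono hcover |>.trans (measure_union_le _ _)).not_gt h

namespace IsDensityPoint

variable {A : Set ℝ} {a : ℝ}

theorem tendsto_volume_diff_div (hAm : MeasurableSet A) (h : IsDensityPoint A a) :
    Tendsto (fun δ => volume (Ioo (a - δ) (a + δ) \ A) / ENNReal.ofReal (2 * δ))
      (𝓝[>] 0) (𝓝 0) := by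
  have hcompl : Tendsto
      (fun δ => 1 - volume (A ∩ Ioo (a - δ) (a + δ)) / ENNReal.ofReal (2 * δ)) (𝓝[>] 0) (𝓝 0) := by
    have := ((ENNReal.continuous_sub_left ENNReal.one_ne_top).tendsto 1).comp h
    rwa [tsub_self] at this
  refine hcompl.congr' (eventually_mem_nhdsWithin.mono fun δ (hδ : 0 < δ) => ?_)
  have hsplit : volume (A ∩ Ioo (a - δ) (a + δ)) / ENNReal.ofReal (2 * δ)
      + volume (Ioo (a - δ) (a + δ) \ A) / ENNReal.ofReal (2 * δ) = 1 := by
    rw [← ENNReal.add_div, inter_comm, measure_inter_add_sdiff _ hAm, Real.volume_Ioo,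
      show a + δ - (a - δ) = 2 * δ by ring,
      ENNReal.div_self (ENNReal.ofReal_pos.2 (by positivity)).ne' ENNReal.ofReal_ne_top]
  rw [← hsplit, ENNReal.add_sub_cancel_left (ne_top_of_le_ne_top ENNReal.one_ne_top
    (hsplit ▸ le_self_add))]

theorem eventually_volume_diff_lt (hAm : MeasurableSet A) (h : IsDensityPoint A a)
    {ε : ℝ} (hε : 0 < ε) :
    ∀ᶠ δ in 𝓝[>] 0, volume (Ioo (a - δ) (a + δ) \ A) < ENNReal.ofReal (ε * δ) := by
  filter_upwards [(h.tendsto_volume_diff_div hAm).eventually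
    (eventually_lt_nhds (ENNReal.ofReal_pos.2 (half_pos hε))), self_mem_nhdsWithin]
    with δ hlt (hδ : 0 < δ)
  rw [ENNReal.div_lt_iff (Or.inl (ENNReal.ofReal_pos.2 (by positivity)).ne')
    (Or.inl ENNReal.ofReal_ne_top), ← ENNReal.ofReal_mul (by positivity)] at hlt
  convert hlt using 2
  ring

end IsDensityPoint

theorem exists_rat_mapsTo_Ioo {a b δ : ℝ} (ha : 0 < a) (hb : 0 < b) (hδ : 0 < δ) :
    ∃ q : ℚ, 0 < q ∧ (q : ℝ) < b / a ∧
      MapsTo ((q : ℝ) * ·) (Ioo (a - δ) (a + δ)) (Ioo (b - 2 * q * δ) (b + 2 * q * δ)) := by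
  obtain ⟨q, hq_lo, hq_hi⟩ :=
    exists_rat_btwn (div_lt_div_of_pos_left hb ha (by linarith : a < a + δ))
  have hq : (0 : ℝ) < q := (by positivity : 0 < b / (a + δ)).trans hq_lo
  have hqa : (q : ℝ) * a < b := (lt_div_iff₀ ha).1 hq_hi
  have hqaδ : b < q * (a + δ) := (div_lt_iff₀ (by positivity)).1 hq_lo
  refine ⟨q, by exact_mod_cast hq, hq_hi, fun x ⟨hx_lo, hx_hi⟩ => ⟨?_, ?_⟩⟩
  · nlinarith [mul_lt_mul_of_pos_left hx_lo hq]
  · nlinarith [mul_lt_mul_of_pos_left hx_hi hq]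

theorem volume_diff_preimage_mul_le {c : ℝ} (hc : 0 < c) {s t B : Set ℝ}
    (hst : MapsTo (c * ·) s t) :
    volume (s \ (c * ·) ⁻¹' B) ≤ ENNReal.ofReal c⁻¹ * volume (t \ B) :=
  calc volume (s \ (c * ·) ⁻¹' B) ≤ volume ((c * ·) ⁻¹' (t \ B)) :=
        measure_mono fun x hx => ⟨hst hx.1, hx.2⟩
    _ = ENNReal.ofReal c⁻¹ * volume (t \ B) := by
        rw [Real.volume_preimage_mul_left hc.ne', abs_of_pos (inv_pos.2 hc)]

theorem IsDensityPoint.eventually_exists_rat_mul_mem {A B : Set ℝ} {a b : ℝ}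
    (hda : IsDensityPoint A a) (hdb : IsDensityPoint B b)
    (hAm : MeasurableSet A) (hBm : MeasurableSet B) (ha : 0 < a) (hb : 0 < b) :
    ∀ᶠ δ in 𝓝[>] 0, ∃ q : ℚ, 0 < q ∧ ∃ x ∈ A, (q : ℝ) * x ∈ B ∧
      dist x a < δ ∧ dist ((q : ℝ) * x) b < 2 * (b / a) * δ := by
  obtain ⟨η₀, hη₀, hB⟩ :=
    (nhdsGT_basis 0).eventually_iff.1 (hdb.eventually_volume_diff_lt hBm one_half_pos)
  have hsmall : ∀ᶠ δ in 𝓝[>] (0 : ℝ), 2 * (b / a) * δ < η₀ :=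
    (((continuous_const_mul _).tendsto' 0 0 (mul_zero _)).eventually
      (eventually_lt_nhds hη₀)).filter_mono nhdsWithin_le_nhds
  filter_upwards [hda.eventually_volume_diff_lt hAm one_half_pos, hsmall, self_mem_nhdsWithin]
    with δ hA hδη (hδ : 0 < δ)
  obtain ⟨q, hq, hqba, hmaps⟩ := exists_rat_mapsTo_Ioo ha hb hδ
  have hq' : (0 : ℝ) < q := by exact_mod_cast hq
  have hη : 2 * q * δ < η₀ := by nlinarith
  have hpreimage : volume (Ioo (a - δ) (a + δ) \ ((q : ℝ) * ·) ⁻¹' B) < ENNReal.ofReal δ :=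
    calc volume (Ioo (a - δ) (a + δ) \ ((q : ℝ) * ·) ⁻¹' B)
        ≤ ENNReal.ofReal (q : ℝ)⁻¹ * volume (Ioo (b - 2 * q * δ) (b + 2 * q * δ) \ B) :=
          volume_diff_preimage_mul_le hq' hmaps
      _ < ENNReal.ofReal (q : ℝ)⁻¹ * ENNReal.ofReal (1 / 2 * (2 * q * δ)) :=
          ENNReal.mul_lt_mul_right (ENNReal.ofReal_pos.2 (inv_pos.2 hq')).ne'
            ENNReal.ofReal_ne_top (hB ⟨by positivity, hη⟩)
      _ = ENNReal.ofReal δ := by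
          rw [← ENNReal.ofReal_mul (inv_pos.2 hq').le]
          congr 1
          field_simp
  have hcover : volume (Ioo (a - δ) (a + δ) \ A)
      + volume (Ioo (a - δ) (a + δ) \ ((q : ℝ) * ·) ⁻¹' B) < volume (Ioo (a - δ) (a + δ)) :=
    calc _ < ENNReal.ofReal (1 / 2 * δ) + ENNReal.ofReal δ := ENNReal.add_lt_add hA hpreimage
      _ = ENNReal.ofReal (2 * δ - δ / 2) := by
          rw [← ENNReal.ofReal_add (by positivity) hδ.le]
          ring_nf
      _ < ENNReal.ofReal (2 * δ) := (ENNReal.ofReal_lt_ofReal_iff (by positivity)).2 (by linarith)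
      _ = volume (Ioo (a - δ) (a + δ)) := by rw [Real.volume_Ioo]; ring_nf
  obtain ⟨x, ⟨hxI, hxA⟩, hxB⟩ := nonempty_inter_of_measure_diff_add_lt volume hcover
  have hxJ := hmaps hxI
  refine ⟨q, hq, x, hxA, hxB, ?_, ?_⟩
  · rw [Real.dist_eq, abs_sub_lt_iff]
    constructor <;> linarith [hxI.1, hxI.2]
  · rw [Real.dist_eq, abs_sub_lt_iff]
    constructor <;> nlinarith [hxJ.1, hxJ.2]

theorem stmt_2_general (A B : Set ℝ)
    (hAm : MeasurableSet A) (hBm : MeasurableSet B)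
    (a b : ℝ) (ha : 0 < a) (hb : 0 < b)
    (hda : IsDensityPoint A a) (hdb : IsDensityPoint B b) :
    ∃ (q : ℕ → ℚ) (as bs : ℕ → ℝ),
      (∀ n, 0 < q n) ∧ (∀ n, as n ∈ A) ∧ (∀ n, bs n ∈ B) ∧
      Tendsto as atTop (nhds a) ∧ Tendsto bs atTop (nhds b) ∧
      ∀ n, bs n = (q n : ℝ) * as n := by
  obtain ⟨δ, hδ, hgood⟩ := exists_seq_forall_of_frequently
    (hda.eventually_exists_rat_mul_mem hdb hAm hBm ha hb).frequently
  choose q hq as has hbs hdista hdistb using hgood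
  have hδ0 : Tendsto δ atTop (𝓝 0) := hδ.mono_right nhdsWithin_le_nhds
  have hδ0' : Tendsto (fun n => 2 * (b / a) * δ n) atTop (𝓝 0) := by
    simpa using hδ0.const_mul (2 * (b / a))
  refine ⟨q, as, fun n => q n * as n, hq, has, hbs, ?_, ?_, fun _ => rfl⟩
  · exact tendsto_iff_dist_tendsto_zero.2
      (squeeze_zero (fun _ => dist_nonneg) (fun n => (hdista n).le) hδ0)
  · exact tendsto_iff_dist_tendsto_zero.2
      (squeeze_zero (fun _ => dist_nonneg) (fun n => (hdistb n).le) hδ0')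

theorem stmt_2 (A B : Set ℝ) (hA : A ⊆ Set.Ioi 0) (hB : B ⊆ Set.Ioi 0)
    (hAm : MeasurableSet A) (hBm : MeasurableSet B)
    (a b : ℝ) (ha : 0 < a) (hb : 0 < b)
    (hda : IsDensityPoint A a) (hdb : IsDensityPoint B b) :
    ∃ (q : ℕ → ℚ) (as bs : ℕ → ℝ),
      (∀ n, 0 < q n) ∧ (∀ n, as n ∈ A) ∧ (∀ n, bs n ∈ B) ∧
      Tendsto as atTop (nhds a) ∧ Tendsto bs atTop (nhds b) ∧
      ∀ n, bs n = (q n : ℝ) * as n :=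
  stmt_2_general A B hAm hBm a b ha hb hda hdb
end

section
/- Let S : ℝ → ℝ be Lebesgue measurable, subadditive, and satisfy S(qx) = q·S(x) for all x ∈ ℝ and all rationals q ≥ 0. Then there exist constants c⁺, c⁻ ∈ ℝ such that S(x) = c⁺x for x ≥ 0 and S(x) = c⁻x for x ≤ 0. -/
/-!
By Steinhaus's theorem some sublevel set `{x | S x ≤ n ∧ S (-x) ≤ n}` of positive measure has a
difference set containing a neighbourhood of `0`, so subadditivity bounds `S` near `0`.
Homogeneity under `x ↦ m • x` turns this bound into `|S x| ≤ C / m` on smaller and smaller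
neighbourhoods, so `S` is continuous at `0`, and subadditivity spreads continuity to every point.
A continuous function that is homogeneous for nonnegative rationals is homogeneous for
nonnegative reals, so `S` is linear on each half-line.
-/

open MeasureTheory Filter Topology

def IsSubadditive {G : Type*} [Add G] (S : G → ℝ) : Prop :=
  ∀ u v, S (u + v) ≤ S u + S v

namespace IsSubadditive

variable {G : Type*} [AddGroup G] {S : G → ℝ}

theorem map_zero_nonneg (hS : IsSubadditive S) : 0 ≤ S 0 := by
  have := hS 0 0
  rw [add_zero] at this
  linarith

theorem le_sub_add (hS : IsSubadditive S) (x y : G) : S x ≤ S (x - y) + S y := by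
  simpa using hS (x - y) y

variable [TopologicalSpace G] [IsTopologicalAddGroup G]

theorem eventually_abs_le {C : ℝ} (hS : IsSubadditive S) (hC : ∀ᶠ x in 𝓝 0, S x ≤ C) :
    ∀ᶠ x in 𝓝 0, |S x| ≤ C := by
  have hneg : ∀ᶠ x in 𝓝 (0 : G), S (-x) ≤ C :=
    (continuous_neg.tendsto' 0 0 neg_zero).eventually hC
  filter_upwards [hC, hneg] with x hx hnx
  have := hS.le_sub_add 0 x
  rw [zero_sub] at this
  exact abs_le.2 ⟨by linarith [hS.map_zero_nonneg], hx⟩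

theorem continuous_of_tendsto_zero (hS : IsSubadditive S) (h0 : Tendsto S (𝓝 0) (𝓝 0)) :
    Continuous S := by
  refine continuous_iff_continuousAt.2 fun a => ?_
  have hright : Tendsto (fun x => S (x - a)) (𝓝 a) (𝓝 0) :=
    h0.comp (tendsto_sub_nhds_zero_iff.2 tendsto_id)
  have hleft : Tendsto (fun x => S (a - x)) (𝓝 a) (𝓝 0) :=
    h0.comp ((continuous_const.sub continuous_id).tendsto' a 0 (sub_self a))
  refine tendsto_of_tendsto_of_tendsto_of_le_of_le (g := fun x => S a - S (a - x))
    (h := fun x => S (x - a) + S a) (by simpa using tendsto_const_nhds.sub hleft)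
    (by simpa using hright.add tendsto_const_nhds) (fun x => ?_) (fun x => hS.le_sub_add x a)
  linarith [hS.le_sub_add a x]

variable [MeasurableSpace G] [BorelSpace G] [LocallyCompactSpace G]

theorem exists_eventually_le_nhds_zero (μ : Measure G) [μ.IsAddHaarMeasure] [μ.InnerRegular]
    (hS : IsSubadditive S) (hmeas : Measurable S) : ∃ C, ∀ᶠ x in 𝓝 0, S x ≤ C := by
  let E : ℕ → Set G := fun n => {x | S x ≤ n ∧ S (-x) ≤ n}
  have hcover : ⋃ n, E n = Set.univ := by
    refine Set.eq_univ_of_forall fun x => Set.mem_iUnion.2 ?_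
    obtain ⟨n, hn⟩ := exists_nat_ge (max (S x) (S (-x)))
    exact ⟨n, (le_max_left _ _).trans hn, (le_max_right _ _).trans hn⟩
  obtain ⟨n, hn⟩ : ∃ n, 0 < μ (E n) := exists_measure_pos_of_not_measure_iUnion_null <| by
    rw [hcover]
    exact (isOpen_univ.measure_pos μ Set.univ_nonempty).ne'
  have hE : MeasurableSet (E n) :=
    (measurableSet_le hmeas measurable_const).inter
      (measurableSet_le (hmeas.comp measurable_neg) measurable_const)
  refine ⟨2 * n, mem_of_superset (Measure.sub_mem_nhds_zero_of_addHaar_pos μ _ hE hn) ?_⟩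
  rintro _ ⟨u, hu, v, hv, rfl⟩
  calc S (u - v) ≤ S u + S (-v) := by simpa [sub_eq_add_neg] using hS u (-v)
    _ ≤ 2 * n := by linarith [hu.1, hv.2]

end IsSubadditive

theorem tendsto_nhds_zero_of_eventually_abs_le {G : Type*} [AddMonoid G] [TopologicalSpace G]
    [ContinuousAdd G] {S : G → ℝ} {C : ℝ} (hnsmul : ∀ (m : ℕ) x, S (m • x) = m * S x)
    (hC : ∀ᶠ x in 𝓝 0, |S x| ≤ C) : Tendsto S (𝓝 0) (𝓝 0) := by
  refine Metric.tendsto_nhds.2 fun ε hε => ?_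
  have hC0 : 0 ≤ C := (abs_nonneg _).trans hC.self_of_nhds
  obtain ⟨m, hm⟩ := exists_nat_gt (C / ε)
  have hm_pos : (0 : ℝ) < m := lt_of_le_of_lt (by positivity) hm
  have hCm : C < m * ε := by rwa [div_lt_iff₀ hε] at hm
  have hsmul : Tendsto (fun x : G => m • x) (𝓝 0) (𝓝 0) :=
    (continuous_id.nsmul m).tendsto' 0 0 (nsmul_zero m)
  filter_upwards [hsmul.eventually hC] with x hx
  rw [hnsmul, abs_mul, Nat.abs_cast] at hx
  rw [Real.dist_eq, sub_zero]
  exact lt_of_mul_lt_mul_left (hx.trans_lt hCm) hm_pos.le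

theorem Continuous.map_mul_of_rat_homogeneous {S : ℝ → ℝ} (hc : Continuous S)
    (hhom : ∀ x : ℝ, ∀ q : ℚ, 0 ≤ q → S ((q : ℝ) * x) = (q : ℝ) * S x)
    {t : ℝ} (ht : 0 ≤ t) (x : ℝ) : S (t * x) = t * S x := by
  have habs : (fun s : ℝ => S (|s| * x)) = fun s => |s| * S x :=
    Continuous.ext_on Rat.denseRange_cast (by fun_prop) (by fun_prop) <| by
      rintro _ ⟨q, rfl⟩
      simpa [Rat.cast_abs] using hhom x |q| (abs_nonneg q)
  simpa [abs_of_nonneg ht] using congrFun habs t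

theorem stmt_6 (S : ℝ → ℝ) (hmeas : Measurable S)
    (hsub : ∀ u v : ℝ, S (u + v) ≤ S u + S v)
    (hhom : ∀ x : ℝ, ∀ q : ℚ, 0 ≤ q → S ((q : ℝ) * x) = (q : ℝ) * S x) :
    ∃ cp cm : ℝ, (∀ x : ℝ, 0 ≤ x → S x = cp * x) ∧ (∀ x : ℝ, x ≤ 0 → S x = cm * x) := by
  have hS : IsSubadditive S := hsub
  obtain ⟨C, hC⟩ := hS.exists_eventually_le_nhds_zero volume hmeas
  have hnsmul : ∀ (m : ℕ) x, S (m • x) = m * S x := fun m x => by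
    simpa [nsmul_eq_mul] using hhom x m m.cast_nonneg
  have hcont : Continuous S :=
    hS.continuous_of_tendsto_zero (tendsto_nhds_zero_of_eventually_abs_le hnsmul
      (hS.eventually_abs_le hC))
  refine ⟨S 1, -S (-1), fun x hx => ?_, fun x hx => ?_⟩
  · simpa [mul_comm] using hcont.map_mul_of_rat_homogeneous hhom hx 1
  · simpa [mul_comm] using hcont.map_mul_of_rat_homogeneous hhom (neg_nonneg.2 hx) (-1)
end

section
/- Let S : ℝ → ℝ be subadditive with S(qx) = qS(x) for all x ∈ ℝ and rationals q ≥ 0, and suppose S has the Baire property. Then there exist c⁺, c⁻ ∈ ℝ with S(x) = c⁺x for x ≥ 0 and S(x) = c⁻x for x ≤ 0. -/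
open Set Filter Topology

private lemma eps_le {a b : ℝ} (h : ∀ ε : ℝ, 0 < ε → a ≤ b + ε) : a ≤ b := by
  by_contra hc
  push_neg at hc
  have := h ((a - b) / 2) (by linarith)
  linarith

/-- Scaling an upper bound on a positive interval to all positive reals. -/
private lemma scale_pos (S : ℝ → ℝ)
    (hhom : ∀ x : ℝ, ∀ q : ℚ, 0 ≤ q → S ((q : ℝ) * x) = (q : ℝ) * S x)
    {c d B : ℝ} (h0c : 0 < c) (hcd : c < d) (hB : 0 ≤ B)
    (hbd : ∀ x ∈ Set.Ioo c d, S x ≤ B) :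
    ∀ t : ℝ, 0 < t → S t ≤ (B / c) * t := by
  intro t ht
  have hd0 : 0 < d := h0c.trans hcd
  have hlt : t / d < t / c := div_lt_div_of_pos_left ht h0c hcd
  obtain ⟨q, hq1, hq2⟩ := exists_rat_btwn hlt
  have hq0 : (0:ℝ) < (q:ℝ) := lt_trans (div_pos ht hd0) hq1
  have hq0' : (0:ℚ) ≤ q := by exact_mod_cast hq0.le
  have hs : t / (q:ℝ) ∈ Set.Ioo c d := by
    rw [lt_div_iff₀ h0c] at hq2
    rw [div_lt_iff₀ hd0] at hq1
    constructor
    · rw [lt_div_iff₀ hq0]; nlinarith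
    · rw [div_lt_iff₀ hq0]; nlinarith
  have heq : S t = (q:ℝ) * S (t / (q:ℝ)) := by
    have := hhom (t / (q:ℝ)) q hq0'
    rwa [mul_div_cancel₀ t hq0.ne'] at this
  calc S t = (q:ℝ) * S (t / (q:ℝ)) := heq
    _ ≤ (q:ℝ) * B := mul_le_mul_of_nonneg_left (hbd _ hs) hq0.le
    _ ≤ (t / c) * B := mul_le_mul_of_nonneg_right hq2.le hB
    _ = (B / c) * t := by ring

/-- Scaling an upper bound on a negative interval to all negative reals. -/
private lemma scale_neg (S : ℝ → ℝ)
    (hhom : ∀ x : ℝ, ∀ q : ℚ, 0 ≤ q → S ((q : ℝ) * x) = (q : ℝ) * S x)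
    {c d B : ℝ} (hd0 : d < 0) (hcd : c < d) (hB : 0 ≤ B)
    (hbd : ∀ x ∈ Set.Ioo c d, S x ≤ B) :
    ∀ t : ℝ, t < 0 → S t ≤ (B / (-d)) * (-t) := by
  intro t ht
  have hc0 : c < 0 := hcd.trans hd0
  have hlt : t / c < t / d := by
    rw [div_lt_iff_of_neg hc0, div_mul_eq_mul_div, div_lt_iff_of_neg hd0]
    nlinarith
  obtain ⟨q, hq1, hq2⟩ := exists_rat_btwn hlt
  have htc : 0 < t / c := div_pos_of_neg_of_neg ht hc0
  have hq0 : (0:ℝ) < (q:ℝ) := htc.trans hq1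
  have hq0' : (0:ℚ) ≤ q := by exact_mod_cast hq0.le
  have hs : t / (q:ℝ) ∈ Set.Ioo c d := by
    rw [div_lt_iff_of_neg hc0] at hq1
    rw [lt_div_iff_of_neg hd0] at hq2
    constructor
    · rw [lt_div_iff₀ hq0]; nlinarith
    · rw [div_lt_iff₀ hq0]; nlinarith
  have heq : S t = (q:ℝ) * S (t / (q:ℝ)) := by
    have := hhom (t / (q:ℝ)) q hq0'
    rwa [mul_div_cancel₀ t hq0.ne'] at this
  have hqd : (q:ℝ) ≤ t / d := hq2.le
  calc S t = (q:ℝ) * S (t / (q:ℝ)) := heq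
    _ ≤ (q:ℝ) * B := mul_le_mul_of_nonneg_left (hbd _ hs) hq0.le
    _ ≤ (t / d) * B := mul_le_mul_of_nonneg_right hqd hB
    _ = (B / (-d)) * (-t) := by field_simp


/-- Transfer a linear bound on negatives to a linear bound on positives. -/
private lemma transfer_pos (S : ℝ → ℝ)
    (hsub : ∀ u v : ℝ, S (u + v) ≤ S u + S v)
    (hhom : ∀ x : ℝ, ∀ q : ℚ, 0 ≤ q → S ((q : ℝ) * x) = (q : ℝ) * S x)
    {K : ℝ} (hK : 0 ≤ K) (hN : ∀ t : ℝ, t < 0 → S t ≤ K * (-t)) :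
    ∀ t : ℝ, 0 < t → S t ≤ (K + 2 * |S 1|) * t := by
  intro t ht
  obtain ⟨q, hqa, hqb⟩ := exists_rat_btwn (show t < 2 * t by linarith)
  have hq0 : (0:ℝ) < (q:ℝ) := ht.trans hqa
  have hq0' : (0:ℚ) ≤ q := by exact_mod_cast hq0.le
  have hSq : S (q:ℝ) = (q:ℝ) * S 1 := by simpa using hhom 1 q hq0'
  have h1 : S t ≤ S (q:ℝ) + S (t - (q:ℝ)) := by
    have := hsub (q:ℝ) (t - (q:ℝ))
    have he : (q:ℝ) + (t - (q:ℝ)) = t := by ring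
    rwa [he] at this
  have h2 : S (t - (q:ℝ)) ≤ K * ((q:ℝ) - t) := by
    have := hN (t - (q:ℝ)) (by linarith)
    simpa [neg_sub] using this
  have h3 : (q:ℝ) * S 1 ≤ (q:ℝ) * |S 1| :=
    mul_le_mul_of_nonneg_left (le_abs_self _) hq0.le
  have h4 : (0:ℝ) ≤ |S 1| := abs_nonneg _
  nlinarith

/-- Transfer a linear bound on positives to a linear bound on negatives. -/
private lemma transfer_neg (S : ℝ → ℝ)
    (hsub : ∀ u v : ℝ, S (u + v) ≤ S u + S v)
    (hhom : ∀ x : ℝ, ∀ q : ℚ, 0 ≤ q → S ((q : ℝ) * x) = (q : ℝ) * S x)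
    {K : ℝ} (hK : 0 ≤ K) (hP : ∀ t : ℝ, 0 < t → S t ≤ K * t) :
    ∀ t : ℝ, t < 0 → S t ≤ (K + 2 * |S (-1)|) * (-t) := by
  intro t ht
  obtain ⟨q, hqa, hqb⟩ := exists_rat_btwn (show -t < 2 * (-t) by linarith)
  have hq0 : (0:ℝ) < (q:ℝ) := (by linarith : (0:ℝ) < -t).trans hqa
  have hq0' : (0:ℚ) ≤ q := by exact_mod_cast hq0.le
  have hSq : S (-(q:ℝ)) = (q:ℝ) * S (-1) := by
    have := hhom (-1) q hq0'
    simpa [mul_neg, mul_one] using this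
  have h1 : S t ≤ S (-(q:ℝ)) + S (t + (q:ℝ)) := by
    have := hsub (-(q:ℝ)) (t + (q:ℝ))
    have he : -(q:ℝ) + (t + (q:ℝ)) = t := by ring
    rwa [he] at this
  have h2 : S (t + (q:ℝ)) ≤ K * (t + (q:ℝ)) := hP _ (by linarith)
  have h3 : (q:ℝ) * S (-1) ≤ (q:ℝ) * |S (-1)| :=
    mul_le_mul_of_nonneg_left (le_abs_self _) hq0.le
  have h4 : (0:ℝ) ≤ |S (-1)| := abs_nonneg _
  nlinarith

/-- From linear bounds on both half-lines, deduce exact linearity. -/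
private lemma final_lin (S : ℝ → ℝ)
    (hsub : ∀ u v : ℝ, S (u + v) ≤ S u + S v)
    (hhom : ∀ x : ℝ, ∀ q : ℚ, 0 ≤ q → S ((q : ℝ) * x) = (q : ℝ) * S x)
    {KP KN : ℝ} (hKP : 0 ≤ KP) (hKN : 0 ≤ KN)
    (hP : ∀ t : ℝ, 0 < t → S t ≤ KP * t) (hN : ∀ t : ℝ, t < 0 → S t ≤ KN * (-t)) :
    ∃ cp cm : ℝ, (∀ x : ℝ, 0 ≤ x → S x = cp * x) ∧ (∀ x : ℝ, x ≤ 0 → S x = cm * x) := by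
  have hS0 : S 0 = 0 := by simpa using hhom 0 0 le_rfl
  have hSq : ∀ q : ℚ, 0 ≤ q → S (q:ℝ) = (q:ℝ) * S 1 := fun q hq => by
    simpa using hhom 1 q hq
  have hSqm : ∀ q : ℚ, 0 ≤ q → S (-(q:ℝ)) = (q:ℝ) * S (-1) := fun q hq => by
    have := hhom (-1) q hq
    simpa [mul_neg, mul_one] using this
  refine ⟨S 1, -S (-1), ?_, ?_⟩
  · intro x hx
    rcases eq_or_lt_of_le hx with h | h
    · rw [← h, hS0, mul_zero]
    apply le_antisymm
    · -- S x ≤ S 1 * x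
      rw [mul_comm]
      apply eps_le
      intro ε hε
      set δ : ℝ := ε / (|S 1| + KN + 1) with hδdef
      have hδ : 0 < δ := by positivity
      obtain ⟨q, hqa, hqb⟩ := exists_rat_btwn (show x < x + δ by linarith)
      have hq0 : (0:ℝ) < (q:ℝ) := h.trans hqa
      have hq0' : (0:ℚ) ≤ q := by exact_mod_cast hq0.le
      have h1 : S x ≤ S (q:ℝ) + S (x - (q:ℝ)) := by
        have := hsub (q:ℝ) (x - (q:ℝ))
        have he : (q:ℝ) + (x - (q:ℝ)) = x := by ring
        rwa [he] at this
      have h2 : S (x - (q:ℝ)) ≤ KN * ((q:ℝ) - x) := by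
        have := hN (x - (q:ℝ)) (by linarith)
        simpa [neg_sub] using this
      have h3 : S (q:ℝ) = (q:ℝ) * S 1 := hSq q hq0'
      have h4 : (q:ℝ) * S 1 ≤ x * S 1 + ((q:ℝ) - x) * |S 1| := by
        nlinarith [le_abs_self (S 1), neg_abs_le (S 1)]
      have h5 : δ * (|S 1| + KN + 1) = ε := by
        rw [hδdef]; field_simp
      nlinarith [abs_nonneg (S 1)]
    · -- S 1 * x ≤ S x
      rw [mul_comm]
      apply eps_le
      intro ε hε
      set δ : ℝ := ε / (|S 1| + KP + 1) with hδdef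
      have hδ : 0 < δ := by positivity
      obtain ⟨q, hqa, hqb⟩ := exists_rat_btwn (show x < x + δ by linarith)
      have hq0 : (0:ℝ) < (q:ℝ) := h.trans hqa
      have hq0' : (0:ℚ) ≤ q := by exact_mod_cast hq0.le
      have h1 : S (q:ℝ) ≤ S x + S ((q:ℝ) - x) := by
        have := hsub x ((q:ℝ) - x)
        have he : x + ((q:ℝ) - x) = (q:ℝ) := by ring
        rwa [he] at this
      have h2 : S ((q:ℝ) - x) ≤ KP * ((q:ℝ) - x) := hP _ (by linarith)
      have h3 : S (q:ℝ) = (q:ℝ) * S 1 := hSq q hq0'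
      have h4 : x * S 1 ≤ (q:ℝ) * S 1 + ((q:ℝ) - x) * |S 1| := by
        nlinarith [le_abs_self (S 1), neg_abs_le (S 1)]
      have h5 : δ * (|S 1| + KP + 1) = ε := by
        rw [hδdef]; field_simp
      nlinarith [abs_nonneg (S 1)]
  · intro x hx
    rcases eq_or_lt_of_le hx with h | h
    · rw [h, hS0, mul_zero]
    apply le_antisymm
    · -- S x ≤ (-S (-1)) * x = (-x) * S (-1)
      have hgoal : (-S (-1)) * x = (-x) * S (-1) := by ring
      rw [hgoal]
      apply eps_le
      intro ε hε
      set δ : ℝ := ε / (|S (-1)| + KP + 1) with hδdef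
      have hδ : 0 < δ := by positivity
      obtain ⟨q, hqa, hqb⟩ := exists_rat_btwn (show -x < -x + δ by linarith)
      have hq0 : (0:ℝ) < (q:ℝ) := (by linarith : (0:ℝ) < -x).trans hqa
      have hq0' : (0:ℚ) ≤ q := by exact_mod_cast hq0.le
      have h1 : S x ≤ S (-(q:ℝ)) + S (x + (q:ℝ)) := by
        have := hsub (-(q:ℝ)) (x + (q:ℝ))
        have he : -(q:ℝ) + (x + (q:ℝ)) = x := by ring
        rwa [he] at this
      have h2 : S (x + (q:ℝ)) ≤ KP * (x + (q:ℝ)) := hP _ (by linarith)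
      have h3 : S (-(q:ℝ)) = (q:ℝ) * S (-1) := hSqm q hq0'
      have h4 : (q:ℝ) * S (-1) ≤ (-x) * S (-1) + ((q:ℝ) + x) * |S (-1)| := by
        nlinarith [le_abs_self (S (-1)), neg_abs_le (S (-1))]
      have h5 : δ * (|S (-1)| + KP + 1) = ε := by
        rw [hδdef]; field_simp
      nlinarith [abs_nonneg (S (-1))]
    · -- (-S (-1)) * x ≤ S x
      have hgoal : (-S (-1)) * x = (-x) * S (-1) := by ring
      rw [hgoal]
      apply eps_le
      intro ε hε
      set δ₀ : ℝ := ε / (|S (-1)| + KP + 1) with hδ0def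
      have hδ0 : 0 < δ₀ := by positivity
      set δ : ℝ := min δ₀ (-x) with hδdef
      have hδ : 0 < δ := lt_min hδ0 (by linarith)
      have hδle : δ ≤ δ₀ := min_le_left _ _
      have hδx : δ ≤ -x := min_le_right _ _
      obtain ⟨q, hqa, hqb⟩ := exists_rat_btwn (show -x - δ < -x by linarith)
      have hq0 : (0:ℝ) < (q:ℝ) := by
        have : (0:ℝ) ≤ -x - δ := by linarith
        linarith
      have hq0' : (0:ℚ) ≤ q := by exact_mod_cast hq0.le
      have h1 : S (-(q:ℝ)) ≤ S x + S (-(q:ℝ) - x) := by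
        have := hsub x (-(q:ℝ) - x)
        have he : x + (-(q:ℝ) - x) = -(q:ℝ) := by ring
        rwa [he] at this
      have h2 : S (-(q:ℝ) - x) ≤ KP * (-(q:ℝ) - x) := hP _ (by linarith)
      have h3 : S (-(q:ℝ)) = (q:ℝ) * S (-1) := hSqm q hq0'
      have h4 : (-x) * S (-1) ≤ (q:ℝ) * S (-1) + ((-x) - (q:ℝ)) * |S (-1)| := by
        nlinarith [le_abs_self (S (-1)), neg_abs_le (S (-1))]
      have h5 : δ₀ * (|S (-1)| + KP + 1) = ε := by
        rw [hδ0def]; field_simp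
      nlinarith [abs_nonneg (S (-1))]

theorem stmt_7 (S : ℝ → ℝ)
    (hbaire : ∀ U : Set ℝ, IsOpen U → BaireMeasurableSet (S ⁻¹' U))
    (hsub : ∀ u v : ℝ, S (u + v) ≤ S u + S v)
    (hhom : ∀ x : ℝ, ∀ q : ℚ, 0 ≤ q → S ((q : ℝ) * x) = (q : ℝ) * S x) :
    ∃ cp cm : ℝ, (∀ x : ℝ, 0 ≤ x → S x = cp * x) ∧ (∀ x : ℝ, x ≤ 0 → S x = cm * x) := by
  -- Basic algebraic facts
  have hS0 : S 0 = 0 := by simpa using hhom 0 0 le_rfl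
  have hq1 : ∀ q : ℚ, 0 ≤ q → S (q:ℝ) = (q:ℝ) * S 1 := fun q hq => by
    simpa using hhom 1 q hq
  have hqm1 : ∀ q : ℚ, 0 ≤ q → S (-(q:ℝ)) = (q:ℝ) * S (-1) := fun q hq => by
    have := hhom (-1) q hq
    simpa [mul_neg, mul_one] using this
  -- Step 1: Baire category gives an interval avoiding 0 on which S is bounded above.
  have step1 : ∃ c d B : ℝ, c < d ∧ (0 < c ∨ d < 0) ∧ 0 ≤ B ∧
      ∀ x ∈ Set.Ioo c d, S x ≤ B := by
    set A : ℕ → Set ℝ := fun n => S ⁻¹' (Set.Ioo (-(n:ℝ)) n) with hA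
    have hAb : ∀ n, BaireMeasurableSet (A n) := fun n => hbaire _ isOpen_Ioo
    choose U hUo hUeq using fun n => (hAb n).residualEq_isOpen
    -- some U n is nonempty
    have hUn : ∃ n, (U n).Nonempty := by
      by_contra hem
      push_neg at hem
      have hall : ∀ᵇ y : ℝ, ∀ n : ℕ, ¬ (y ∈ A n) := by
        rw [eventually_countable_forall]
        intro n
        have := hUeq n
        filter_upwards [this] with y hy
        intro hyA
        have hyU : U n y := hy ▸ (hyA : A n y)
        rw [hem n] at hyU
        exact hyU
      obtain ⟨y, hy⟩ := (dense_of_mem_residual hall).nonempty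
      obtain ⟨n, hn⟩ := exists_nat_gt |S y|
      refine hy n ?_
      simp only [hA, Set.mem_preimage, Set.mem_Ioo]
      exact ⟨by linarith [neg_abs_le (S y)], lt_of_le_of_lt (le_abs_self _) hn⟩
    obtain ⟨n, hne⟩ := hUn
    -- find an interval inside U n avoiding 0
    obtain ⟨u, hu⟩ := hne
    have hv : ∃ v : ℝ, v ∈ U n ∧ v ≠ 0 := by
      by_cases h0 : u = 0
      · obtain ⟨r, hr0, hball⟩ := Metric.isOpen_iff.mp (hUo n) u hu
        refine ⟨u + r/2, hball ?_, by rw [h0, zero_add]; exact (by linarith : (0:ℝ) < r/2).ne'⟩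
        simp only [Metric.mem_ball, Real.dist_eq, add_sub_cancel_left]
        rw [abs_of_pos (by linarith)]
        linarith
      · exact ⟨u, hu, h0⟩
    obtain ⟨v, hvU, hv0⟩ := hv
    obtain ⟨r₀, hr₀, hball⟩ := Metric.isOpen_iff.mp (hUo n) v hvU
    set r : ℝ := min r₀ |v| / 2 with hrdef
    have hr : 0 < r := by positivity
    have hrr₀ : r < r₀ := by
      have : min r₀ |v| ≤ r₀ := min_le_left _ _
      rw [hrdef]; linarith
    have hrv : r < |v| := by
      have : min r₀ |v| ≤ |v| := min_le_right _ _
      have h0v : 0 < |v| := abs_pos.mpr hv0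
      rw [hrdef]; linarith
    have hIU : Set.Ioo (v - r) (v + r) ⊆ U n := by
      intro y hy
      apply hball
      simp only [Metric.mem_ball, Real.dist_eq]
      rw [abs_lt]
      exact ⟨by linarith [hy.1, hrr₀], by linarith [hy.2, hrr₀]⟩
    -- doubling trick: S is bounded by 2n on (2(v-r), 2(v+r))
    have hdouble : ∀ x ∈ Set.Ioo (2*(v-r)) (2*(v+r)), S x ≤ 2*n := by
      intro x hx
      -- residual set where A n agrees with U n, also after reflection y ↦ x - y
      have hE : ∀ᵇ y : ℝ, (y ∈ A n) = (y ∈ U n) := hUeq n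
      have hrefl : Filter.Tendsto (fun y : ℝ => x - y) (residual ℝ) (residual ℝ) := by
        have h : ((Homeomorph.neg ℝ).trans (Homeomorph.addLeft x) : ℝ → ℝ)
            = fun y : ℝ => x - y := by
          funext y; simp [sub_eq_add_neg]
        have := tendsto_residual_of_isOpenMap
          ((Homeomorph.neg ℝ).trans (Homeomorph.addLeft x)).continuous
          ((Homeomorph.neg ℝ).trans (Homeomorph.addLeft x)).isOpenMap
        rwa [h] at this
      have hE' : ∀ᵇ y : ℝ, ((x - y) ∈ A n) = ((x - y) ∈ U n) := hrefl.eventually hE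
      have hD := hE.and hE'
      have hdense := dense_of_mem_residual hD
      set V : Set ℝ := Set.Ioo (v - r) (v + r) ∩ Set.Ioo (x - (v+r)) (x - (v-r)) with hV
      have hVo : IsOpen V := (isOpen_Ioo).inter isOpen_Ioo
      have hVne : V.Nonempty := by
        refine ⟨x/2, ⟨⟨by linarith [hx.1], by linarith [hx.2]⟩,
          ⟨by linarith [hx.2], by linarith [hx.1]⟩⟩⟩
      obtain ⟨y, hyV, hyD⟩ := hdense.inter_open_nonempty V hVo hVne
      have hyA : y ∈ A n := by
        rw [hyD.1]; exact hIU hyV.1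
      have hxyA : x - y ∈ A n := by
        rw [hyD.2]
        apply hIU
        constructor
        · have := hyV.2.2; linarith
        · have := hyV.2.1; linarith
      have h1 : S y < n := hyA.2
      have h2 : S (x - y) < n := hxyA.2
      have hsum := hsub y (x - y)
      have hx' : y + (x - y) = x := by ring
      rw [hx'] at hsum
      linarith
    -- now pick the correct signed interval
    rcases abs_cases v with ⟨hav, hv0'⟩ | ⟨hav, hv0'⟩
    · -- v > 0 : 0 < v - r
      refine ⟨2*(v-r), 2*(v+r), 2*n, by linarith, Or.inl (by rw [hav] at hrv; linarith),
        by positivity, hdouble⟩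
    · -- v < 0 : v + r < 0
      refine ⟨2*(v-r), 2*(v+r), 2*n, by linarith, Or.inr (by rw [hav] at hrv; linarith),
        by positivity, hdouble⟩
  obtain ⟨c, d, B, hcd, hsign, hB, hbd⟩ := step1
  rcases hsign with h0c | hd0
  · have hP := scale_pos S hhom h0c hcd hB hbd
    have hKP : 0 ≤ B / c := div_nonneg hB h0c.le
    have hN := transfer_neg S hsub hhom hKP hP
    exact final_lin S hsub hhom hKP
      (by positivity) hP hN
  · have hN := scale_neg S hhom hd0 hcd hB hbd
    have hKN : 0 ≤ B / (-d) := div_nonneg hB (by linarith)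
    have hP := transfer_pos S hsub hhom hKN hN
    exact final_lin S hsub hhom (by positivity) hKN hP hN
end

section
/- Let X be a normed vector space and S : X → ℝ midpoint convex. If S is discontinuous at a point x₀ ∈ X, then there is a sequence xₙ → x₀ with S(xₙ) → +∞ (i.e., S is unbounded above on every neighbourhood of x₀). -/
open Filter

private lemma amp_9 {X : Type*} [NormedAddCommGroup X] [NormedSpace ℝ X]
    (S : X → ℝ)
    (hmid : ∀ x y : X, S ((1/2 : ℝ) • (x + y)) ≤ (S x + S y) / 2)
    (x₀ : X) (c δ : ℝ) :
    ∀ k : ℕ, ∀ y : X, dist y x₀ < δ → S x₀ + c ≤ S y →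
      ∃ w, dist w x₀ < 2 ^ k * δ ∧ S x₀ + 2 ^ k * c ≤ S w := by
  intro k
  induction k with
  | zero => intro y h1 h2; exact ⟨y, by simpa using h1, by simpa using h2⟩
  | succ k ih =>
    intro y h1 h2
    obtain ⟨w, hw1, hw2⟩ := ih y h1 h2
    refine ⟨(2 : ℝ) • w - x₀, ?_, ?_⟩
    · have he : (2 : ℝ) • w - x₀ - x₀ = (2 : ℝ) • (w - x₀) := by
        rw [smul_sub, two_smul, two_smul]; abel
      rw [dist_eq_norm, he, norm_smul]
      simp only [dist_eq_norm] at hw1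
      have h2n : ‖(2:ℝ)‖ = 2 := by norm_num
      rw [h2n]
      calc 2 * ‖w - x₀‖ < 2 * (2 ^ k * δ) := by
            have : (0:ℝ) < 2 := by norm_num
            nlinarith [norm_nonneg (w - x₀)]
        _ = 2 ^ (k+1) * δ := by ring
    · have hmidw : S w ≤ (S x₀ + S ((2 : ℝ) • w - x₀)) / 2 := by
        have he : (1/2 : ℝ) • (x₀ + ((2 : ℝ) • w - x₀)) = w := by
          have hx : x₀ + ((2 : ℝ) • w - x₀) = (2 : ℝ) • w := by abel
          rw [hx, smul_smul]; norm_num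
        have := hmid x₀ ((2 : ℝ) • w - x₀)
        rwa [he] at this
      have hr : (2:ℝ) ^ (k+1) * c = 2 * (2 ^ k * c) := by ring
      rw [hr]
      linarith

theorem stmt_9 {X : Type*} [NormedAddCommGroup X] [NormedSpace ℝ X]
    (S : X → ℝ)
    (hmid : ∀ x y : X, S ((1/2 : ℝ) • (x + y)) ≤ (S x + S y) / 2)
    (x₀ : X) (hdisc : ¬ ContinuousAt S x₀) :
    ∃ x : ℕ → X, Tendsto x atTop (nhds x₀) ∧ Tendsto (fun n => S (x n)) atTop atTop := by
  rw [Metric.continuousAt_iff] at hdisc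
  push_neg at hdisc
  obtain ⟨ε, hε, H⟩ := hdisc
  -- Step 1: points above S x₀ + ε arbitrarily close to x₀
  have step1 : ∀ δ > (0:ℝ), ∃ y, dist y x₀ < δ ∧ S x₀ + ε ≤ S y := by
    intro δ hδ
    obtain ⟨z, hz1, hz2⟩ := H δ hδ
    rw [Real.dist_eq] at hz2
    rcases le_abs.mp hz2 with h | h
    · exact ⟨z, hz1, by linarith⟩
    · refine ⟨(2 : ℝ) • x₀ - z, ?_, ?_⟩
      · have he : (2 : ℝ) • x₀ - z - x₀ = x₀ - z := by
          rw [two_smul]; abel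
        rw [dist_eq_norm, he, ← norm_neg, neg_sub, ← dist_eq_norm]
        exact hz1
      · have hmidw : S x₀ ≤ (S z + S ((2 : ℝ) • x₀ - z)) / 2 := by
          have he : (1/2 : ℝ) • (z + ((2 : ℝ) • x₀ - z)) = x₀ := by
            have hx : z + ((2 : ℝ) • x₀ - z) = (2 : ℝ) • x₀ := by abel
            rw [hx, smul_smul]; norm_num
          have := hmid z ((2 : ℝ) • x₀ - z)
          rwa [he] at this
        linarith
  -- Step 2: for each n, a point within (1/2)^n with value ≥ S x₀ + 2^n ε
  have step2 : ∀ n : ℕ, ∃ w : X, dist w x₀ < (1/2 : ℝ) ^ n ∧ S x₀ + 2 ^ n * ε ≤ S w := by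
    intro n
    have hδ : (0:ℝ) < (1/4 : ℝ) ^ n := by positivity
    obtain ⟨y, hy1, hy2⟩ := step1 ((1/4 : ℝ) ^ n) hδ
    obtain ⟨w, hw1, hw2⟩ := amp_9 S hmid x₀ ε ((1/4 : ℝ) ^ n) n y hy1 hy2
    refine ⟨w, ?_, hw2⟩
    have : (2:ℝ) ^ n * (1/4 : ℝ) ^ n = (1/2 : ℝ) ^ n := by
      rw [← mul_pow]; norm_num
    rwa [this] at hw1
  choose x hx1 hx2 using step2
  refine ⟨x, ?_, ?_⟩
  · rw [tendsto_iff_dist_tendsto_zero]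
    refine squeeze_zero (fun n => dist_nonneg) (fun n => (hx1 n).le) ?_
    exact tendsto_pow_atTop_nhds_zero_of_lt_one (by norm_num) (by norm_num)
  · refine tendsto_atTop_mono (fun n => hx2 n) ?_
    refine tendsto_atTop_add_const_left _ _ ?_
    exact Tendsto.atTop_mul_const hε (tendsto_pow_atTop_atTop_of_one_lt (by norm_num))
end

section
/- Let X be a Banach space and S : X → ℝ midpoint convex. If for every closed separable subspace B ⊆ X the restriction S|B is continuous, then S is continuous on X. -/
theorem stmt_10 {X : Type*} [NormedAddCommGroup X] [NormedSpace ℝ X] [CompleteSpace X]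
    (S : X → ℝ)
    (hmid : ∀ x y : X, S ((1/2 : ℝ) • (x + y)) ≤ (S x + S y) / 2)
    (hsep : ∀ B : Subspace ℝ X, IsClosed (B : Set X) →
      TopologicalSpace.IsSeparable (B : Set X) → ContinuousOn S (B : Set X)) :
    Continuous S := by
  rw [continuous_iff_seqContinuous]
  intro u x hu
  set s : Set X := insert x (Set.range u) with hs
  have hscount : s.Countable := (Set.countable_range u).insert x
  set B : Subspace ℝ X := (Submodule.span ℝ s).topologicalClosure with hB
  have hclosed : IsClosed (B : Set X) := Submodule.isClosed_topologicalClosure _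
  have hsepB : TopologicalSpace.IsSeparable (B : Set X) :=
    (hscount.isSeparable.span).closure
  have hsub : s ⊆ (B : Set X) :=
    (Submodule.subset_span).trans (Submodule.le_topologicalClosure _)
  have hxB : x ∈ (B : Set X) := hsub (Set.mem_insert _ _)
  have huB : ∀ n, u n ∈ (B : Set X) := fun n =>
    hsub (Set.mem_insert_of_mem _ ⟨n, rfl⟩)
  have hcont := hsep B hclosed hsepB x hxB
  have htend : Filter.Tendsto u Filter.atTop (nhdsWithin x (B : Set X)) :=
    tendsto_nhdsWithin_of_tendsto_nhds_of_eventually_within u hu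
      (Filter.Eventually.of_forall huB)
  exact hcont.tendsto.comp htend
end

section
/- Let X be a normed vector space and S : X → ℝ midpoint convex. If S is bounded above on some nonempty open set, then S is continuous and convex (S((1-t)x+ty) ≤ (1-t)S(x)+tS(y) for all t ∈ [0,1]). -/
open Metric

section Aux
variable {X : Type*} [NormedAddCommGroup X] [NormedSpace ℝ X]

/-- Iterating midpoint convexity: dyadic weights `2⁻ⁿ`. -/
lemma stmt_11_aux_pow {S : X → ℝ}
    (hmid : ∀ x y : X, S ((1/2 : ℝ) • (x + y)) ≤ (S x + S y) / 2)
    (n : ℕ) (u v : X) :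
    S ((1 - (1/2:ℝ)^n) • u + ((1/2:ℝ)^n) • v)
      ≤ (1 - (1/2:ℝ)^n) * S u + (1/2:ℝ)^n * S v := by
  induction n with
  | zero => simp
  | succ n ih =>
    have key : (1 - (1/2:ℝ)^(n+1)) • u + ((1/2:ℝ)^(n+1)) • v
        = (1/2:ℝ) • (u + ((1 - (1/2:ℝ)^n) • u + ((1/2:ℝ)^n) • v)) := by
      module
    rw [key]
    calc S _ ≤ (S u + S ((1 - (1/2:ℝ)^n) • u + ((1/2:ℝ)^n) • v)) / 2 := hmid _ _
    _ ≤ (S u + ((1 - (1/2:ℝ)^n) * S u + (1/2:ℝ)^n * S v)) / 2 := by linarith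
    _ = (1 - (1/2:ℝ)^(n+1)) * S u + (1/2:ℝ)^(n+1) * S v := by ring

/-- Midpoint convexity gives convexity for all dyadic rational weights. -/
lemma stmt_11_aux_dyadic {S : X → ℝ}
    (hmid : ∀ x y : X, S ((1/2 : ℝ) • (x + y)) ≤ (S x + S y) / 2)
    (x y : X) :
    ∀ n : ℕ, ∀ k : ℕ, k ≤ 2^n →
      S ((1 - (k:ℝ)/2^n) • x + ((k:ℝ)/2^n) • y)
        ≤ (1 - (k:ℝ)/2^n) * S x + ((k:ℝ)/2^n) * S y := by
  intro n
  induction n with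
  | zero =>
    intro k hk
    interval_cases k <;> simp
  | succ n ih =>
    intro k hk
    have hpow : 2^(n+1) = 2 * 2^n := by rw [pow_succ]; ring
    rcases Nat.even_or_odd k with ⟨m, hm⟩ | ⟨m, hm⟩
    · subst hm
      have hm2 : m ≤ 2^n := by omega
      have hcast : ((m + m : ℕ):ℝ)/2^(n+1) = (m:ℝ)/2^n := by
        push_cast; field_simp; ring
      rw [hcast]
      exact ih m hm2
    · subst hm
      have hm1 : m ≤ 2^n := by omega
      have hm2 : m + 1 ≤ 2^n := by omega
      have h1 := ih m hm1
      have h2 := ih (m+1) hm2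
      have key : (1 - ((2*m+1 : ℕ):ℝ)/2^(n+1)) • x + (((2*m+1:ℕ):ℝ)/2^(n+1)) • y
          = (1/2:ℝ) • (((1 - (m:ℝ)/2^n) • x + ((m:ℝ)/2^n) • y)
              + ((1 - ((m+1:ℕ):ℝ)/2^n) • x + (((m+1:ℕ):ℝ)/2^n) • y)) := by
        push_cast
        match_scalars <;> field_simp <;> ring
      rw [key]
      calc S _ ≤ (S ((1 - (m:ℝ)/2^n) • x + ((m:ℝ)/2^n) • y)
            + S ((1 - ((m+1:ℕ):ℝ)/2^n) • x + (((m+1:ℕ):ℝ)/2^n) • y)) / 2 := hmid _ _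
      _ ≤ ((1 - (m:ℝ)/2^n) * S x + ((m:ℝ)/2^n) * S y
            + ((1 - ((m+1:ℕ):ℝ)/2^n) * S x + (((m+1:ℕ):ℝ)/2^n) * S y)) / 2 := by linarith
      _ = (1 - ((2*m+1:ℕ):ℝ)/2^(n+1)) * S x + (((2*m+1:ℕ):ℝ)/2^(n+1)) * S y := by
            push_cast; field_simp; ring

/-- Bernstein–Doetsch: continuity part. -/
lemma stmt_11_aux_cont {S : X → ℝ}
    (hmid : ∀ x y : X, S ((1/2 : ℝ) • (x + y)) ≤ (S x + S y) / 2)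
    (U : Set X) (hU : IsOpen U) (hne : U.Nonempty) (M : ℝ) (hbd : ∀ x ∈ U, S x ≤ M) :
    Continuous S := by
  obtain ⟨x₀, hx₀⟩ := hne
  obtain ⟨r, hr, hball⟩ := Metric.isOpen_iff.1 hU x₀ hx₀
  -- local upper bound around every point
  have hloc : ∀ x : X, ∃ ρ > 0, ∃ K : ℝ, ∀ w ∈ ball x ρ, S w ≤ K := by
    intro x
    refine ⟨r/2, by positivity, (M + S ((2:ℝ) • x - x₀))/2, ?_⟩
    intro w hw
    have heq : w = (1/2:ℝ) • (((2:ℝ) • w - (2:ℝ) • x + x₀) + ((2:ℝ) • x - x₀)) := by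
      module
    have hu : (2:ℝ) • w - (2:ℝ) • x + x₀ ∈ ball x₀ r := by
      rw [mem_ball, dist_eq_norm] at hw ⊢
      have : (2:ℝ) • w - (2:ℝ) • x + x₀ - x₀ = (2:ℝ) • (w - x) := by module
      rw [this, norm_smul]
      simp only [Real.norm_ofNat]
      nlinarith [norm_nonneg (w - x)]
    have hSu : S ((2:ℝ) • w - (2:ℝ) • x + x₀) ≤ M := hbd _ (hball hu)
    calc S w = S ((1/2:ℝ) • (((2:ℝ) • w - (2:ℝ) • x + x₀) + ((2:ℝ) • x - x₀))) := by
          rw [← heq]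
    _ ≤ (S ((2:ℝ) • w - (2:ℝ) • x + x₀) + S ((2:ℝ) • x - x₀)) / 2 := hmid _ _
    _ ≤ (M + S ((2:ℝ) • x - x₀))/2 := by linarith
  rw [continuous_iff_continuousAt]
  intro x
  obtain ⟨ρ, hρ, K, hK⟩ := hloc x
  have hxK : S x ≤ K := hK x (mem_ball_self hρ)
  rw [Metric.continuousAt_iff]
  intro ε hε
  set C := K - S x with hCdef
  have hC0 : 0 ≤ C := by simp [hCdef]; linarith
  obtain ⟨n, hn⟩ := exists_pow_lt_of_lt_one (show (0:ℝ) < ε/(C+1) by positivity)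
    (by norm_num : (1/2:ℝ) < 1)
  have hpn : (0:ℝ) < (1/2:ℝ)^n := by positivity
  have hεC : (1/2:ℝ)^n * (C+1) < ε := by
    rw [lt_div_iff₀ (by positivity)] at hn
    linarith
  refine ⟨(1/2)^n * ρ, by positivity, ?_⟩
  have hup : ∀ w' : X, dist w' x < (1/2:ℝ)^n * ρ → S w' ≤ S x + (1/2:ℝ)^n * C := by
    intro w' hw'
    have key := stmt_11_aux_pow hmid n x (x + (2:ℝ)^n • (w' - x))
    have heq : (1 - (1/2:ℝ)^n) • x + ((1/2:ℝ)^n) • (x + (2:ℝ)^n • (w' - x)) = w' := by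
      have h2 : ((1/2:ℝ))^n * (2:ℝ)^n = 1 := by
        rw [← mul_pow]; norm_num
      match_scalars <;> nlinarith [h2]
    rw [heq] at key
    have hmem : x + (2:ℝ)^n • (w' - x) ∈ ball x ρ := by
      rw [mem_ball, dist_eq_norm]
      have h3 : x + (2:ℝ)^n • (w' - x) - x = (2:ℝ)^n • (w' - x) := by module
      rw [h3, norm_smul]
      rw [dist_eq_norm] at hw'
      have h4 : ‖(2:ℝ)^n‖ = (2:ℝ)^n := by
        rw [Real.norm_eq_abs, abs_of_pos (by positivity)]
      rw [h4]
      have h5 : (2:ℝ)^n * ((1/2:ℝ)^n * ρ) = ρ := by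
        rw [show ((2:ℝ)^n * ((1/2:ℝ)^n * ρ)) = ((2:ℝ)*(1/2))^n * ρ by rw [mul_pow]; ring]
        norm_num
      nlinarith [norm_nonneg (w' - x), pow_pos (show (0:ℝ) < 2 by norm_num) n]
    have hSv : S (x + (2:ℝ)^n • (w' - x)) ≤ K := hK _ hmem
    nlinarith [hpn]
  intro w hw
  have h1 := hup w hw
  have h2 : S (x + (x - w)) ≤ S x + (1/2:ℝ)^n * C := by
    apply hup
    rw [dist_eq_norm] at hw ⊢
    have : x + (x - w) - x = -(w - x) := by module
    rw [this, norm_neg]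
    exact hw
  have hmx : S x ≤ (S w + S (x + (x - w))) / 2 := by
    have heq : (1/2:ℝ) • (w + (x + (x - w))) = x := by module
    have := hmid w (x + (x - w))
    rwa [heq] at this
  rw [Real.dist_eq, abs_sub_lt_iff]
  have hexp : (1/2:ℝ)^n * (C+1) = (1/2:ℝ)^n * C + (1/2:ℝ)^n := by ring
  constructor <;> linarith

end Aux

theorem stmt_11 {X : Type*} [NormedAddCommGroup X] [NormedSpace ℝ X]
    (S : X → ℝ)
    (hmid : ∀ x y : X, S ((1/2 : ℝ) • (x + y)) ≤ (S x + S y) / 2)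
    (U : Set X) (hU : IsOpen U) (hne : U.Nonempty) (M : ℝ) (hbd : ∀ x ∈ U, S x ≤ M) :
    Continuous S ∧
      ∀ x y : X, ∀ t ∈ Set.Icc (0 : ℝ) 1,
        S ((1 - t) • x + t • y) ≤ (1 - t) * S x + t * S y := by
  have hcont : Continuous S := stmt_11_aux_cont hmid U hU hne M hbd
  refine ⟨hcont, ?_⟩
  intro x y t ⟨ht0, ht1⟩
  set k : ℕ → ℕ := fun n => (⌊t * 2^n⌋).toNat with hkdef
  have hfl : ∀ n : ℕ, (0:ℤ) ≤ ⌊t * 2^n⌋ := by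
    intro n
    exact Int.floor_nonneg.2 (by positivity)
  have hkcast : ∀ n : ℕ, ((k n : ℕ):ℝ) = ((⌊t * 2^n⌋ : ℤ) : ℝ) := by
    intro n
    rw [hkdef]; simp only
    exact_mod_cast congrArg (Int.cast : ℤ → ℝ) (Int.toNat_of_nonneg (hfl n))
  have hkle : ∀ n : ℕ, k n ≤ 2^n := by
    intro n
    rw [hkdef]
    simp only
    rw [Int.toNat_le]
    have h1 : t * 2^n ≤ 2^n := by nlinarith [pow_pos (show (0:ℝ) < 2 by norm_num) n]
    have h2 : ⌊t * 2^n⌋ ≤ (2^n : ℤ) := by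
      calc ⌊t * 2^n⌋ ≤ ⌊((2:ℝ))^n⌋ := Int.floor_le_floor h1
      _ = 2^n := by
          rw [show ((2:ℝ))^n = ((2^n : ℤ) : ℝ) by push_cast; ring, Int.floor_intCast]
    exact_mod_cast h2
  set tseq : ℕ → ℝ := fun n => (k n : ℝ)/2^n with htseq
  have hts_le : ∀ n, tseq n ≤ t := by
    intro n
    rw [htseq]; simp only
    rw [div_le_iff₀ (by positivity), hkcast]
    exact Int.floor_le _
  have hts_ge : ∀ n, t - (1/2:ℝ)^n ≤ tseq n := by
    intro n
    have h2 : ((1/2:ℝ))^n * 2^n = 1 := by rw [← mul_pow]; norm_num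
    have h3 : t * 2^n - 1 < ((⌊t * 2^n⌋ : ℤ) : ℝ) := Int.sub_one_lt_floor _
    rw [htseq]; simp only
    rw [le_div_iff₀ (by positivity : (0:ℝ) < 2^n), hkcast]
    nlinarith
  have htend : Filter.Tendsto tseq Filter.atTop (nhds t) := by
    apply tendsto_of_tendsto_of_tendsto_of_le_of_le (g := fun n => t - (1/2:ℝ)^n)
      (h := fun _ => t)
    · have h0 := tendsto_pow_atTop_nhds_zero_of_lt_one (show (0:ℝ) ≤ 1/2 by norm_num)
        (by norm_num : (1/2:ℝ) < 1)
      have : Filter.Tendsto (fun n : ℕ => t - (1/2:ℝ)^n) Filter.atTop (nhds (t - 0)) :=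
        Filter.Tendsto.sub tendsto_const_nhds h0
      simpa using this
    · exact tendsto_const_nhds
    · exact hts_ge
    · exact hts_le
  have hφ : Continuous fun s : ℝ => S ((1-s) • x + s • y) := by
    apply hcont.comp
    continuity
  have hψ : Continuous fun s : ℝ => (1-s) * S x + s * S y := by continuity
  refine le_of_tendsto_of_tendsto' ((hφ.continuousAt).tendsto.comp htend)
    ((hψ.continuousAt).tendsto.comp htend) ?_
  intro n
  simp only [Function.comp]
  exact stmt_11_aux_dyadic hmid x y n (k n) (hkle n)
end

section
/- Let X be a normed vector space and S : X → ℝ midpoint convex with S discontinuous at x₀. Then for every k ∈ ℕ and every ε > 0 there exists y with ‖y - x₀‖ < ε and S(y) ≥ S(x₀) + k·h for some fixed h > 0 independent of k and ε; more precisely, if xₙ → x₀ with S(xₙ) - S(x₀) → h ∈ (0,∞], then for the equally spaced points xₙ(i) = x₀ + i(xₙ - x₀) one has S(xₙ(k)) - S(x₀) ≥ k(S(xₙ) - S(x₀)). -/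
open Filter

theorem stmt_19 {X : Type*} [NormedAddCommGroup X] [NormedSpace ℝ X]
    (S : X → ℝ)
    (hmid : ∀ x y : X, S ((1/2 : ℝ) • (x + y)) ≤ (S x + S y) / 2)
    (x₀ : X) (x : ℕ → X) (hx : Tendsto x atTop (nhds x₀))
    (h : EReal) (hpos : 0 < h)
    (hlim : Tendsto (fun n => ((S (x n) - S x₀ : ℝ) : EReal)) atTop (nhds h)) :
    ∀ n k : ℕ, (k : ℝ) * (S (x n) - S x₀) ≤ S (x₀ + (k : ℝ) • (x n - x₀)) - S x₀ := by
  intro n k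
  set v := x n - x₀ with hv
  set a : ℕ → X := fun i => x₀ + (i : ℝ) • v with ha
  have hmidpt : ∀ i : ℕ, a (i + 1) = (1/2 : ℝ) • (a i + a (i + 2)) := by
    intro i
    simp only [ha]
    push_cast
    module
  have hstep : ∀ i : ℕ, S (a (i + 1)) - S (a i) ≤ S (a (i + 2)) - S (a (i + 1)) := by
    intro i
    have := hmid (a i) (a (i + 2))
    rw [← hmidpt i] at this
    linarith
  have hmono : ∀ i : ℕ, S (a 1) - S (a 0) ≤ S (a (i + 1)) - S (a i) := by
    intro i
    induction i with
    | zero => exact le_rfl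
    | succ j ih => exact le_trans ih (hstep j)
  have ha0 : a 0 = x₀ := by simp [ha]
  have ha1 : a 1 = x n := by simp [ha, hv]
  have hsum : ∀ m : ℕ, (m : ℝ) * (S (a 1) - S (a 0)) ≤ S (a m) - S (a 0) := by
    intro m
    induction m with
    | zero => simp
    | succ j ih =>
      have := hmono j
      push_cast
      linarith
  have hfin := hsum k
  rw [ha0, ha1] at hfin
  exact hfin
end
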